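/- Let G = (V,E) be an infinite, connected graph in which every vertex has degree at most D, and suppose the Green's function g of simple random walk on G satisfies g(x,y) ≤ exp(−a·d(x,y) + a′) for all vertices x, y, for some constants a > 0 and a′ < ∞. Let o ∈ V and p ∈ (0,1). Then the minimum number of toppling moves needed to transport mass p to graph distance at least n from o, starting from the unit point mass δ_o, satisfies both N_p(G, B_n, δ_o) ≤ (1−p)^{−1} · e^{a′} · D^{2n} and N_p(G, B_n, δ_o) ≥ (p / (2·e^{a+a′})) · e^{a·n} for every integer n ≥ 1. -/

import Mathlib

/-!
The Green potential `Φ_μ(u) = ∑_w μ(w) g(w,u)` drops by exactly `m · δ_v(u)` when mass `m` is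
toppled at `v`, since `g = I + P g`. Starting from `δ_o`, the total mass ever toppled at `u` is
therefore at most `g(o,u) ≤ exp(-a d(o,u) + a')`.

Lower bound: mass leaves the ball `B_n` only through moves at distance at least `n - 1` from `o`,
and each of them carries at most `exp(-a (n - 1) + a')`.

Upper bound: greedily topple the whole mass of the heaviest vertex of `B_n`. As long as less than
`p` has left the ball, every move carries more than `(1 - p) / |B_n|`, while the total mass toppled
in `B_n` is at most `|B_n| e^{a'}`; finally `|B_n| ≤ D^n`.
-/

open scoped Classical ENNReal

noncomputable section

variable {V : Type*}

/-- A mass distribution: a nonnegative, finitely supported function on the vertices. -/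
def IsMassDist (μ : V → ℝ) : Prop :=
  (∀ v, 0 ≤ μ v) ∧ (Function.support μ).Finite

/-- The unit point mass at a vertex `o`. -/
def pointMass (o : V) : V → ℝ := fun u => if u = o then 1 else 0

/-- The result of toppling mass `m` at the vertex `v`: remove mass `m` from `v` and
distribute it equally among the neighbors of `v`. -/
def topple (G : SimpleGraph V) [G.LocallyFinite] (μ : V → ℝ) (v : V) (m : ℝ) : V → ℝ :=
  fun u => μ u - (if u = v then m else 0) + (if G.Adj v u then m / (G.degree v : ℝ) else 0)

/-- `ToppleSeq G μ₀ t μ₁` : there is a sequence of `t` valid toppling moves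
taking `μ₀` to `μ₁`. -/
def ToppleSeq (G : SimpleGraph V) [G.LocallyFinite] (μ₀ : V → ℝ) (t : ℕ) (μ₁ : V → ℝ) : Prop :=
  ∃ μs : ℕ → V → ℝ, μs 0 = μ₀ ∧ μs t = μ₁ ∧
    ∀ i < t, ∃ v m, 0 < m ∧ m ≤ μs i v ∧ μs (i + 1) = topple G (μs i) v m

/-- `CanTransport G A p μ₀ t` : starting from `μ₀` there are `t` toppling moves after which
the total mass outside of `A` is at least `p`. -/
def CanTransport (G : SimpleGraph V) [G.LocallyFinite] (A : Set V) (p : ℝ)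
    (μ₀ : V → ℝ) (t : ℕ) : Prop :=
  ∃ μ₁ : V → ℝ, ToppleSeq G μ₀ t μ₁ ∧ p ≤ ∑' v : {v : V // v ∉ A}, μ₁ v

/-- The open ball of radius `n` around `o` in the graph distance. -/
def gball (G : SimpleGraph V) (o : V) (n : ℕ) : Set V := {u | G.dist o u < n}


/-- `rwKernel G k x y` is the `k`-step transition probability of simple random walk on `G`
(at each step the walk moves to a uniformly random neighbor of its current vertex). -/
def rwKernel (G : SimpleGraph V) [G.LocallyFinite] : ℕ → V → V → ℝ
  | 0 => fun x y => if x = y then 1 else 0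
  | (k + 1) => fun x y => ∑ z ∈ G.neighborFinset x, ((G.degree x : ℝ))⁻¹ * rwKernel G k z y

/-- The Green's function of simple random walk on `G`: the expected number of visits to `y`
of the walk started at `x`, with value in `ℝ≥0∞` (it is infinite for recurrent walks). -/
def greenFn (G : SimpleGraph V) [G.LocallyFinite] (x y : V) : ℝ≥0∞ :=
  ∑' k : ℕ, ENNReal.ofReal (rwKernel G k x y)


open Finset

namespace SimpleGraph

variable {G : SimpleGraph V} [G.LocallyFinite]

theorem Connected.degree_pos [Infinite V] (hconn : G.Connected) (v : V) : 0 < G.degree v := by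
  obtain ⟨u, hu⟩ := exists_ne v
  obtain ⟨q⟩ := hconn v u
  cases q with
  | nil => exact absurd rfl hu
  | cons h _ => exact G.degree_pos_iff_exists_adj v |>.mpr ⟨_, h⟩

/-- The second vertex of a geodesic from `o` to a vertex at distance two or more has two distinct
neighbours on it. -/
theorem Connected.exists_two_le_degree [Infinite V] (hconn : G.Connected) (o : V) :
    ∃ x, 2 ≤ G.degree x := by
  obtain ⟨u, hu⟩ := Infinite.exists_notMem_finset (insert o (G.neighborFinset o))
  obtain ⟨q, hq⟩ := hconn.exists_walk_length_eq_dist o u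
  rcases q with _ | ⟨hox, _ | ⟨hxy, q⟩⟩
  · simp at hu
  · simp [hox] at hu
  · rename_i x y
    have hyo : y ≠ o := by
      rintro rfl
      have := G.dist_le q
      simp only [Walk.length_cons] at hq
      omega
    refine ⟨x, ?_⟩
    calc 2 = #{o, y} := (card_pair hyo.symm).symm
      _ ≤ #(G.neighborFinset x) := card_le_card <| by
          simp [insert_subset_iff, hox.symm, hxy]
      _ = G.degree x := G.card_neighborFinset_eq_degree x

variable (G)

def walkEnds (o : V) : ℕ → Finset V
  | 0 => {o}
  | k + 1 => (walkEnds o k).biUnion fun v => G.neighborFinset v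

theorem mem_walkEnds_length {u o : V} (q : G.Walk u o) : u ∈ G.walkEnds o q.length := by
  induction q with
  | nil => simp [walkEnds]
  | cons h _ ih => exact mem_biUnion.mpr ⟨_, ih, (G.mem_neighborFinset _ _).mpr h.symm⟩

theorem card_walkEnds_le {D : ℕ} (hD : ∀ v, G.degree v ≤ D) (o : V) (k : ℕ) :
    #(G.walkEnds o k) ≤ D ^ k := by
  induction k with
  | zero => simp [walkEnds]
  | succ k ih =>
    calc #(G.walkEnds o (k + 1)) ≤ #(G.walkEnds o k) * D :=
          card_biUnion_le_card_mul _ _ _ fun v _ =>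
            (G.card_neighborFinset_eq_degree v).trans_le (hD v)
      _ ≤ D ^ (k + 1) := by rw [pow_succ]; gcongr

theorem gball_subset_walkEnds (hconn : G.Connected) (o : V) (n : ℕ) :
    gball G o n ⊆ ↑((range n).biUnion (G.walkEnds o)) := by
  intro u hu
  obtain ⟨q, hq⟩ := hconn.exists_walk_length_eq_dist u o
  have hlt : q.length < n := by rw [hq, G.dist_comm]; exact hu
  exact mem_biUnion.mpr ⟨q.length, mem_range.mpr hlt, G.mem_walkEnds_length q⟩

theorem finite_gball (hconn : G.Connected) (o : V) (n : ℕ) : (gball G o n).Finite :=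
  (finite_toSet _).subset (G.gball_subset_walkEnds hconn o n)

theorem ncard_gball_le (hconn : G.Connected) {D : ℕ} (hD : ∀ v, G.degree v ≤ D) (hD2 : 2 ≤ D)
    (o : V) (n : ℕ) : (gball G o n).ncard ≤ D ^ n :=
  calc (gball G o n).ncard ≤ #((range n).biUnion (G.walkEnds o)) := by
        rw [← Set.ncard_coe_finset]
        exact Set.ncard_le_ncard (G.gball_subset_walkEnds hconn o n)
    _ ≤ ∑ k ∈ range n, #(G.walkEnds o k) := card_biUnion_le
    _ ≤ ∑ k ∈ range n, D ^ k := sum_le_sum fun k _ => G.card_walkEnds_le hD o k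
    _ ≤ D ^ n := (Nat.geomSum_lt hD2 fun _ => mem_range.mp).le

end SimpleGraph

section Toppling

variable {G : SimpleGraph V} [G.LocallyFinite]

theorem pointMass_nonneg (o : V) : 0 ≤ pointMass o := fun u => by
  unfold pointMass; split_ifs <;> norm_num

theorem summable_pointMass (o : V) : Summable (pointMass o) :=
  summable_of_ne_finset_zero (s := {o}) fun u hu => if_neg (by simpa using hu)

theorem tsum_pointMass (o : V) : ∑' u, pointMass o u = 1 :=
  tsum_ite_eq o fun _ => 1

theorem sum_pointMass {o : V} {s : Finset V} (ho : o ∈ s) : ∑ u ∈ s, pointMass o u = 1 := by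
  simp [pointMass, ho]

theorem tsum_compl_eq_sub {μ : V → ℝ} (hμ : Summable μ) (s : Finset V) :
    ∑' v : {v // v ∉ (s : Set V)}, μ v = ∑' v, μ v - ∑ v ∈ s, μ v := by
  rw [← hμ.sum_add_tsum_compl (s := s), add_sub_cancel_left]
  rfl

theorem sum_ite_adj_of_subset {v : V} {s : Finset V} (hs : G.neighborFinset v ⊆ s) (c : ℝ) :
    ∑ u ∈ s, (if G.Adj v u then c else 0) = G.degree v * c := by
  rw [← sum_subset hs fun u _ hu => if_neg (by simpa using hu),
    sum_congr rfl fun u hu => if_pos ((G.mem_neighborFinset v u).mp hu), sum_const,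
    G.card_neighborFinset_eq_degree, nsmul_eq_mul]

theorem tsum_ite_adj (v : V) (c : ℝ) :
    ∑' u, (if G.Adj v u then c else 0) = G.degree v * c := by
  rw [tsum_eq_sum (s := G.neighborFinset v) fun u hu => if_neg (by simpa using hu),
    sum_ite_adj_of_subset subset_rfl]

theorem topple_nonneg {μ : V → ℝ} {v : V} {m : ℝ} (hμ : 0 ≤ μ) (hm : 0 ≤ m) (hmv : m ≤ μ v) :
    0 ≤ topple G μ v m := by
  intro u
  have hin : 0 ≤ if G.Adj v u then m / G.degree v else 0 := by split_ifs <;> positivity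
  have hout : (if u = v then m else 0) ≤ μ u := by
    split_ifs with huv
    · exact huv ▸ hmv
    · exact hμ u
  simp only [topple, Pi.zero_apply]
  linarith

theorem Summable.topple {μ : V → ℝ} (hμ : Summable μ) (v : V) (m : ℝ) :
    Summable (topple G μ v m) :=
  (hμ.sub (summable_of_ne_finset_zero (s := {v}) fun u hu => if_neg (by simpa using hu))).add
    (summable_of_ne_finset_zero (s := G.neighborFinset v) fun u hu => if_neg (by simpa using hu))

theorem tsum_topple {μ : V → ℝ} (hμ : Summable μ) {v : V} (hv : 0 < G.degree v) (m : ℝ) :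
    ∑' u, topple G μ v m u = ∑' u, μ u := by
  have hout : Summable fun u => if u = v then m else 0 :=
    summable_of_ne_finset_zero (s := {v}) fun u hu => if_neg (by simpa using hu)
  have hin : Summable fun u => if G.Adj v u then m / G.degree v else 0 :=
    summable_of_ne_finset_zero (s := G.neighborFinset v) fun u hu => if_neg (by simpa using hu)
  simp only [topple]
  rw [(hμ.sub hout).tsum_add hin, hμ.tsum_sub hout, tsum_ite_eq, tsum_ite_adj]
  field_simp
  ring

theorem sum_topple_of_neighborFinset_subset (μ : V → ℝ) {v : V} {s : Finset V} (hv : v ∈ s)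
    (hs : G.neighborFinset v ⊆ s) (hdeg : 0 < G.degree v) (m : ℝ) :
    ∑ u ∈ s, topple G μ v m u = ∑ u ∈ s, μ u := by
  simp only [topple]
  rw [sum_add_distrib, sum_sub_distrib, sum_ite_eq' s v, if_pos hv, sum_ite_adj_of_subset hs]
  field_simp
  ring

theorem sum_sub_le_sum_topple (μ : V → ℝ) (v : V) {m : ℝ} (hm : 0 ≤ m) (s : Finset V) :
    ∑ u ∈ s, μ u - m ≤ ∑ u ∈ s, topple G μ v m u := by
  simp only [topple]
  rw [sum_add_distrib, sum_sub_distrib, sum_ite_eq' s v]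
  have hout : (if v ∈ s then m else 0) ≤ m := by split_ifs <;> linarith
  have hin : 0 ≤ ∑ u ∈ s, (if G.Adj v u then m / G.degree v else 0) :=
    sum_nonneg fun u _ => by split_ifs <;> positivity
  linarith

end Toppling

section Green

variable (G : SimpleGraph V) [G.LocallyFinite]

theorem rwKernel_nonneg (k : ℕ) (x y : V) : 0 ≤ rwKernel G k x y := by
  induction k generalizing x with
  | zero => simp only [rwKernel]; positivity
  | succ k ih => exact sum_nonneg fun z _ => mul_nonneg (by positivity) (ih z)

theorem greenFn_eq_add (v u : V) :
    greenFn G v u = (if v = u then 1 else 0) +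
      ∑ z ∈ G.neighborFinset v, ENNReal.ofReal (G.degree v : ℝ)⁻¹ * greenFn G z u := by
  unfold greenFn
  rw [tsum_eq_zero_add' ENNReal.summable]
  congr 1
  · simp only [rwKernel]
    split_ifs <;> simp
  · simp only [rwKernel]
    simp_rw [ENNReal.ofReal_sum_of_nonneg fun z _ =>
      mul_nonneg (inv_nonneg.mpr (Nat.cast_nonneg _)) (rwKernel_nonneg G _ z u),
      ENNReal.ofReal_mul (inv_nonneg.mpr (Nat.cast_nonneg _))]
    rw [Summable.tsum_finsetSum fun _ _ => ENNReal.summable]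
    simp_rw [ENNReal.tsum_mul_left]

def greenPotential (μ : V → ℝ) (u : V) : ℝ≥0∞ :=
  ∑' w, ENNReal.ofReal (μ w) * greenFn G w u

theorem greenPotential_pointMass (o u : V) : greenPotential G (pointMass o) u = greenFn G o u := by
  simp only [greenPotential, pointMass]
  simp_rw [apply_ite ENNReal.ofReal, ite_mul, ENNReal.ofReal_one, ENNReal.ofReal_zero, one_mul,
    zero_mul]
  exact tsum_ite_eq o _

/-- This is where `g = I + P g` (`greenFn_eq_add`) enters. -/
theorem greenPotential_topple {μ : V → ℝ} {v : V} {m : ℝ} (hμ : 0 ≤ μ) (hm : 0 ≤ m)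
    (hmv : m ≤ μ v) (u : V) :
    greenPotential G (topple G μ v m) u + (if v = u then ENNReal.ofReal m else 0) =
      greenPotential G μ u := by
  -- `μ = ν + m δ_v` and `topple G μ v m = ν + (m / deg v) 1_{N(v)}` with `ν ≥ 0`
  set ν : V → ℝ := fun w => μ w - if w = v then m else 0
  have hν : ∀ w, 0 ≤ ν w := fun w => by
    simp only [ν]; split_ifs with h
    · subst h; linarith
    · simpa using hμ w
  have hμν : ∀ w, ENNReal.ofReal (μ w) =
      ENNReal.ofReal (ν w) + if w = v then ENNReal.ofReal m else 0 := by
    intro w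
    split_ifs with h
    · rw [← ENNReal.ofReal_add (hν w) hm]; simp [ν, h]
    · simp [ν, h]
  have htν : ∀ w, ENNReal.ofReal (topple G μ v m w) =
      ENNReal.ofReal (ν w) + if G.Adj v w then ENNReal.ofReal (m / G.degree v) else 0 := by
    intro w
    split_ifs with h
    · rw [← ENNReal.ofReal_add (hν w) (by positivity)]; simp [topple, ν, h]
    · simp [topple, ν, h]
  have hadj : ∑' w, (if G.Adj v w then ENNReal.ofReal (m / G.degree v) else 0) * greenFn G w u =
      ∑ z ∈ G.neighborFinset v, ENNReal.ofReal (m / G.degree v) * greenFn G z u := by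
    rw [tsum_eq_sum (s := G.neighborFinset v) fun w hw => by
      simp [(G.mem_neighborFinset v w).not.mp hw]]
    exact sum_congr rfl fun z hz => by rw [if_pos ((G.mem_neighborFinset v z).mp hz)]
  simp only [greenPotential]
  simp_rw [hμν, htν, add_mul, ENNReal.tsum_add, hadj, ite_mul, zero_mul, tsum_ite_eq]
  rw [greenFn_eq_add G v u, div_eq_mul_inv, ENNReal.ofReal_mul hm]
  simp_rw [mul_assoc, ← mul_sum]
  split_ifs <;> ring

end Green

section Sequences

variable (G : SimpleGraph V) [G.LocallyFinite]

/-- Unlike in `ToppleSeq`, moves of mass zero are allowed: the greedy strategy may make them. -/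
def IsTopplingSeq (μs : ℕ → V → ℝ) (vs : ℕ → V) (ms : ℕ → ℝ) (t : ℕ) : Prop :=
  ∀ i < t, 0 ≤ ms i ∧ ms i ≤ μs i (vs i) ∧ μs (i + 1) = topple G (μs i) (vs i) (ms i)

def emitted (vs : ℕ → V) (ms : ℕ → ℝ) (t : ℕ) (u : V) : ℝ :=
  ∑ i ∈ range t with vs i = u, ms i

variable {G}

theorem ToppleSeq.exists_isTopplingSeq [Nonempty V] {μ₀ μ₁ : V → ℝ} {t : ℕ}
    (h : ToppleSeq G μ₀ t μ₁) :
    ∃ μs vs ms, μs 0 = μ₀ ∧ μs t = μ₁ ∧ IsTopplingSeq G μs vs ms t := by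
  obtain ⟨μs, h0, ht, hstep⟩ := h
  choose! vs ms hpos hle heq using hstep
  exact ⟨μs, vs, ms, h0, ht, fun i hi => ⟨(hpos i hi).le, hle i hi, heq i hi⟩⟩

namespace IsTopplingSeq

variable {μs : ℕ → V → ℝ} {vs : ℕ → V} {ms : ℕ → ℝ} {t : ℕ}

theorem toppleSeq (h : IsTopplingSeq G μs vs ms t) (hpos : ∀ i < t, 0 < ms i) :
    ToppleSeq G (μs 0) t (μs t) :=
  ⟨μs, rfl, rfl, fun i hi => ⟨vs i, ms i, hpos i hi, (h i hi).2.1, (h i hi).2.2⟩⟩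

theorem nonneg (h : IsTopplingSeq G μs vs ms t) (h0 : 0 ≤ μs 0) : ∀ i ≤ t, 0 ≤ μs i
  | 0, _ => h0
  | i + 1, hi => by
    obtain ⟨hm, hmv, heq⟩ := h i hi
    rw [heq]
    exact topple_nonneg (h.nonneg h0 i (by omega)) hm hmv

theorem summable (h : IsTopplingSeq G μs vs ms t) (h0 : Summable (μs 0)) :
    ∀ i ≤ t, Summable (μs i)
  | 0, _ => h0
  | i + 1, hi => by
    rw [(h i hi).2.2]
    exact (h.summable h0 i (by omega)).topple _ _

theorem tsum_eq (h : IsTopplingSeq G μs vs ms t) (hdeg : ∀ v, 0 < G.degree v)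
    (h0 : Summable (μs 0)) : ∀ i ≤ t, ∑' u, μs i u = ∑' u, μs 0 u
  | 0, _ => rfl
  | i + 1, hi => by
    rw [(h i hi).2.2, tsum_topple (h.summable h0 i (by omega)) (hdeg _)]
    exact h.tsum_eq hdeg h0 i (by omega)

theorem le_emitted (h : IsTopplingSeq G μs vs ms t) {j : ℕ} (hj : j < t) :
    ms j ≤ emitted vs ms t (vs j) :=
  single_le_sum (fun i hi => (h i (mem_range.mp (mem_filter.mp hi).1)).1)
    (mem_filter.mpr ⟨mem_range.mpr hj, rfl⟩)

theorem greenPotential_add_emitted (h : IsTopplingSeq G μs vs ms t) (h0 : 0 ≤ μs 0) (u : V) :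
    ∀ i ≤ t, greenPotential G (μs i) u + ENNReal.ofReal (emitted vs ms i u) =
      greenPotential G (μs 0) u
  | 0, _ => by simp [emitted]
  | i + 1, hi => by
    obtain ⟨hm, hmv, heq⟩ := h i hi
    have hemit : emitted vs ms (i + 1) u = (if vs i = u then ms i else 0) + emitted vs ms i u := by
      simp only [emitted, sum_filter, sum_range_succ]
      ring
    have hnonneg : 0 ≤ emitted vs ms i u :=
      sum_nonneg fun j hj => (h j (by have := mem_range.mp (mem_filter.mp hj).1; omega)).1
    rw [heq, hemit, ENNReal.ofReal_add (by split_ifs <;> simp [hm]) hnonneg, ← add_assoc,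
      apply_ite ENNReal.ofReal, ENNReal.ofReal_zero,
      greenPotential_topple G (h.nonneg h0 i (by omega)) hm hmv]
    exact h.greenPotential_add_emitted h0 u i (by omega)

theorem emitted_le_greenFn (h : IsTopplingSeq G μs vs ms t) {o : V} (h0 : μs 0 = pointMass o)
    (u : V) : ENNReal.ofReal (emitted vs ms t u) ≤ greenFn G o u := by
  rw [← greenPotential_pointMass G o u, ← h0,
    ← h.greenPotential_add_emitted (h0 ▸ pointMass_nonneg o) u t le_rfl]
  exact le_add_self

theorem emitted_le (h : IsTopplingSeq G μs vs ms t) {o : V} (h0 : μs 0 = pointMass o) {u : V}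
    {c : ℝ} (hc : 0 ≤ c) (hgreen : greenFn G o u ≤ ENNReal.ofReal c) : emitted vs ms t u ≤ c :=
  (ENNReal.ofReal_le_ofReal_iff hc).mp ((h.emitted_le_greenFn h0 u).trans hgreen)

end IsTopplingSeq

end Sequences

section LowerBound

variable {G : SimpleGraph V} [G.LocallyFinite]

theorem sum_gball_sub_le_sum_topple (hconn : G.Connected) {o : V} {n : ℕ} {s : Finset V}
    (hs : ↑s = gball G o n) (μ : V → ℝ) {v : V} (hdeg : 0 < G.degree v) {m : ℝ} (hm : 0 ≤ m) :
    ∑ u ∈ s, μ u - (if n ≤ G.dist o v + 1 then m else 0) ≤ ∑ u ∈ s, topple G μ v m u := by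
  split_ifs with hv
  · exact sum_sub_le_sum_topple μ v hm s
  · have hmem : ∀ {u}, G.dist o u < n → u ∈ s := fun h => by rw [← mem_coe, hs]; exact h
    rw [sub_zero, sum_topple_of_neighborFinset_subset μ (hmem (by omega)) ?_ hdeg]
    intro u hu
    have := hconn.dist_triangle (u := o) (v := v) (w := u)
    rw [SimpleGraph.dist_eq_one_iff_adj.mpr ((G.mem_neighborFinset v u).mp hu)] at this
    exact hmem (by omega)

theorem IsTopplingSeq.sum_gball_ge {μs : ℕ → V → ℝ} {vs : ℕ → V} {ms : ℕ → ℝ} {t : ℕ}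
    (h : IsTopplingSeq G μs vs ms t) (hconn : G.Connected) (hdeg : ∀ v, 0 < G.degree v)
    {o : V} {n : ℕ} {s : Finset V} (hs : ↑s = gball G o n) :
    ∀ i ≤ t, ∑ u ∈ s, μs 0 u - ∑ j ∈ range i, (if n ≤ G.dist o (vs j) + 1 then ms j else 0) ≤
      ∑ u ∈ s, μs i u
  | 0, _ => by simp
  | i + 1, hi => by
    obtain ⟨hm, -, heq⟩ := h i hi
    have hprev := h.sum_gball_ge hconn hdeg hs i (by omega)
    have hstep := sum_gball_sub_le_sum_topple hconn hs (μs i) (hdeg (vs i)) hm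
    rw [sum_range_succ, heq]
    linarith

theorem CanTransport.le_of_greenFn_le [Infinite V] {o : V} {p : ℝ} {n t : ℕ}
    (h : CanTransport G (gball G o n) p (pointMass o) t) (hconn : G.Connected) {a a' : ℝ}
    (ha : 0 ≤ a)
    (hgreen : ∀ u, greenFn G o u ≤ ENNReal.ofReal (Real.exp (-a * G.dist o u + a')))
    (hn : 1 ≤ n) :
    p / (2 * Real.exp (a + a')) * Real.exp (a * n) ≤ t := by
  obtain ⟨μ₁, hseq, hp⟩ := h
  obtain ⟨μs, vs, ms, h0, rfl, hμs⟩ := hseq.exists_isTopplingSeq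
  have hdeg := hconn.degree_pos
  set s := (G.finite_gball hconn o n).toFinset
  have hs : ↑s = gball G o n := Set.Finite.coe_toFinset _
  have ho : o ∈ s := by rw [← mem_coe, hs]; simp [gball]; omega
  have hsum0 : Summable (μs 0) := h0 ▸ summable_pointMass o
  set c := Real.exp (-a * (n - 1) + a')
  have hmove : ∀ j < t, (if n ≤ G.dist o (vs j) + 1 then ms j else 0) ≤ c := by
    intro j hj
    split_ifs with hv
    · have hv' : (n : ℝ) ≤ G.dist o (vs j) + 1 := by exact_mod_cast hv
      calc ms j ≤ emitted vs ms t (vs j) := hμs.le_emitted hj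
        _ ≤ Real.exp (-a * G.dist o (vs j) + a') :=
          hμs.emitted_le h0 (Real.exp_pos _).le (hgreen _)
        _ ≤ c := Real.exp_le_exp.mpr (by nlinarith)
    · exact (Real.exp_pos _).le
  have hpc : p ≤ t * c := calc
    p ≤ ∑' v : {v // v ∉ gball G o n}, μs t v := hp
    _ = 1 - ∑ u ∈ s, μs t u := by
      rw [← hs, tsum_compl_eq_sub (hμs.summable hsum0 t le_rfl), hμs.tsum_eq hdeg hsum0 t le_rfl,
        h0, tsum_pointMass]
    _ ≤ ∑ j ∈ range t, (if n ≤ G.dist o (vs j) + 1 then ms j else 0) := by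
      have := hμs.sum_gball_ge hconn hdeg hs t le_rfl
      rw [h0, sum_pointMass ho] at this
      linarith
    _ ≤ ∑ j ∈ range t, c := sum_le_sum fun j hj => hmove j (mem_range.mp hj)
    _ = t * c := by simp
  have hc : c * Real.exp (a * n) = Real.exp (a + a') := by
    rw [← Real.exp_add]; ring_nf
  rw [div_mul_eq_mul_div, div_le_iff₀ (by positivity)]
  calc p * Real.exp (a * n) ≤ t * c * Real.exp (a * n) :=
        mul_le_mul_of_nonneg_right hpc (Real.exp_pos _).le
    _ = t * Real.exp (a + a') := by rw [mul_assoc, hc]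
    _ ≤ t * (2 * Real.exp (a + a')) :=
        mul_le_mul_of_nonneg_left (by linarith [Real.exp_pos (a + a')]) t.cast_nonneg

end LowerBound

section Greedy

variable (G : SimpleGraph V) [G.LocallyFinite] {s : Finset V} (hs : s.Nonempty)

def greedyVertex (μ : V → ℝ) : V :=
  (s.exists_max_image μ hs).choose

theorem greedyVertex_mem (μ : V → ℝ) : greedyVertex hs μ ∈ s :=
  (s.exists_max_image μ hs).choose_spec.1

theorem sum_le_card_mul_greedyVertex (μ : V → ℝ) :
    ∑ u ∈ s, μ u ≤ #s * μ (greedyVertex hs μ) :=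
  (sum_le_card_nsmul s μ _ (s.exists_max_image μ hs).choose_spec.2).trans_eq
    (nsmul_eq_mul _ _)

def greedySeq (μ₀ : V → ℝ) : ℕ → V → ℝ
  | 0 => μ₀
  | i + 1 => topple G (greedySeq μ₀ i) (greedyVertex hs (greedySeq μ₀ i))
      (greedySeq μ₀ i (greedyVertex hs (greedySeq μ₀ i)))

variable {G}

theorem greedySeq_nonneg {μ₀ : V → ℝ} (h0 : 0 ≤ μ₀) : ∀ i, 0 ≤ greedySeq G hs μ₀ i
  | 0 => h0
  | i + 1 => topple_nonneg (greedySeq_nonneg h0 i) (greedySeq_nonneg h0 i _) le_rfl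

theorem isTopplingSeq_greedySeq {μ₀ : V → ℝ} (h0 : 0 ≤ μ₀) (t : ℕ) :
    IsTopplingSeq G (greedySeq G hs μ₀) (fun i => greedyVertex hs (greedySeq G hs μ₀ i))
      (fun i => greedySeq G hs μ₀ i (greedyVertex hs (greedySeq G hs μ₀ i))) t :=
  fun i _ => ⟨greedySeq_nonneg hs h0 i _, le_rfl, rfl⟩

/-- While the mass in `s` exceeds `q`, every greedy move topples more than `q / #s`; but the total
mass toppled at each vertex `u` is at most `g(o, u)`. -/
theorem card_mul_le_of_lt_sum_greedySeq {o : V} {C : ℝ} (hC : 0 ≤ C)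
    (hgreen : ∀ u ∈ s, greenFn G o u ≤ ENNReal.ofReal C) {q : ℝ} {M : ℕ}
    (hM : ∀ i < M, q < ∑ u ∈ s, greedySeq G hs (pointMass o) i u) : M * q ≤ #s * (#s * C) := by
  set μs := greedySeq G hs (pointMass o)
  set vs := fun i => greedyVertex hs (μs i)
  set ms := fun i => μs i (vs i)
  have hseq : IsTopplingSeq G μs vs ms M := isTopplingSeq_greedySeq hs (pointMass_nonneg o) M
  calc M * q = ∑ i ∈ range M, q := by simp
    _ ≤ ∑ i ∈ range M, #s * ms i := sum_le_sum fun i hi =>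
        (hM i (mem_range.mp hi)).le.trans (sum_le_card_mul_greedyVertex hs (μs i))
    _ = #s * ∑ w ∈ s, emitted vs ms M w := by
        rw [← mul_sum]
        exact congrArg _ (sum_fiberwise_of_maps_to (fun i _ => greedyVertex_mem hs (μs i)) ms).symm
    _ ≤ #s * ∑ w ∈ s, C := by
        gcongr with w hw
        exact hseq.emitted_le rfl hC (hgreen w hw)
    _ = #s * (#s * C) := by simp

theorem exists_canTransport_le [Infinite V] (hconn : G.Connected) {D : ℕ}
    (hD : ∀ v, G.degree v ≤ D) {o : V} {a' : ℝ}
    (hgreen : ∀ u, greenFn G o u ≤ ENNReal.ofReal (Real.exp a')) {p : ℝ} (hp1 : p < 1) {n : ℕ}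
    (hn : 1 ≤ n) :
    ∃ t : ℕ, CanTransport G (gball G o n) p (pointMass o) t ∧
      (t : ℝ) ≤ (1 - p)⁻¹ * Real.exp a' * (D : ℝ) ^ (2 * n) := by
  set s := (G.finite_gball hconn o n).toFinset
  have hs : ↑s = gball G o n := Set.Finite.coe_toFinset _
  have ho : o ∈ s := by rw [← mem_coe, hs]; simp [gball]; omega
  have hne : s.Nonempty := ⟨o, ho⟩
  have hcard : (#s : ℝ) ≤ D ^ n := by
    obtain ⟨x, hx⟩ := hconn.exists_two_le_degree o
    have := G.ncard_gball_le hconn hD (hx.trans (hD x)) o n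
    rw [Set.ncard_eq_toFinset_card _ (G.finite_gball hconn o n)] at this
    exact_mod_cast this
  set μs := greedySeq G hne (pointMass o)
  have hseq := isTopplingSeq_greedySeq (G := G) hne (pointMass_nonneg o)
  have hbound : ∀ M : ℕ, (∀ i < M, 1 - p < ∑ u ∈ s, μs i u) →
      M * (1 - p) ≤ #s * (#s * Real.exp a') :=
    fun M => card_mul_le_of_lt_sum_greedySeq hne (Real.exp_pos a').le fun u _ => hgreen u
  have hex : ∃ t, ∑ u ∈ s, μs t u ≤ 1 - p := by
    by_contra! hcon
    obtain ⟨M, hM⟩ := exists_nat_gt (#s * (#s * Real.exp a') / (1 - p))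
    rw [div_lt_iff₀ (by linarith)] at hM
    linarith [hbound M fun i _ => hcon i]
  have hbefore : ∀ i < Nat.find hex, 1 - p < ∑ u ∈ s, μs i u :=
    fun i hi => lt_of_not_ge (Nat.find_min hex hi)
  refine ⟨Nat.find hex, ⟨μs (Nat.find hex), (hseq _).toppleSeq fun i hi => ?_, ?_⟩, ?_⟩
  · exact pos_of_mul_pos_right ((by linarith : (0 : ℝ) < 1 - p).trans
      ((hbefore i hi).trans_le (sum_le_card_mul_greedyVertex hne (μs i)))) (#s).cast_nonneg
  · have hdeg := hconn.degree_pos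
    have hsum0 : Summable (μs 0) := summable_pointMass o
    rw [← hs, tsum_compl_eq_sub ((hseq _).summable hsum0 _ le_rfl),
      (hseq _).tsum_eq hdeg hsum0 _ le_rfl]
    simp only [μs, greedySeq, tsum_pointMass]
    linarith [Nat.find_spec hex]
  · have h := hbound _ hbefore
    rw [mul_assoc, inv_mul_eq_div, le_div_iff₀ (by linarith)]
    calc (Nat.find hex : ℝ) * (1 - p) ≤ #s * (#s * Real.exp a') := h
      _ ≤ D ^ n * (D ^ n * Real.exp a') := by gcongr
      _ = Real.exp a' * D ^ (2 * n) := by ring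

end Greedy

theorem controlled_diffusion_exp_decay_green_general {V : Type*} (G : SimpleGraph V) [G.LocallyFinite]
    [Infinite V] (hconn : G.Connected) (D : ℕ) (hD : ∀ v : V, G.degree v ≤ D)
    (a a' : ℝ) (ha : 0 < a)
    (hgreen : ∀ x y : V, greenFn G x y ≤ ENNReal.ofReal (Real.exp (-a * (G.dist x y : ℝ) + a')))
    (o : V) (p : ℝ) (hp1 : p < 1) (n : ℕ) (hn : 1 ≤ n) :
    (∃ t : ℕ, CanTransport G (gball G o n) p (pointMass o) t ∧
      (t : ℝ) ≤ (1 - p)⁻¹ * Real.exp a' * (D : ℝ) ^ (2 * n)) ∧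
    (∀ t : ℕ, CanTransport G (gball G o n) p (pointMass o) t →
      p / (2 * Real.exp (a + a')) * Real.exp (a * n) ≤ (t : ℝ)) := by
  have hgreen' : ∀ u, greenFn G o u ≤ ENNReal.ofReal (Real.exp a') := fun u =>
    (hgreen o u).trans <| ENNReal.ofReal_le_ofReal <| Real.exp_le_exp.mpr <| by
      linarith [mul_nonneg ha.le (Nat.cast_nonneg (G.dist o u))]
  exact ⟨exists_canTransport_le hconn hD hgreen' hp1 hn,
    fun _ h => h.le_of_greenFn_le hconn ha.le (hgreen o) hn⟩

/-- **Bounded degree graphs with exponential decay of the Green's function**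
(Florescu–Peres–Rácz, Theorem 7.2). Let `G` be an infinite, connected graph with all degrees at
most `D`, and suppose `g(x,y) ≤ exp(-a·d(x,y) + a')` for all vertices `x,y`, where `g` is the
Green's function of simple random walk, `a > 0`. Starting from the unit point mass at `o`, for
every `n ≥ 1` the number of toppling moves needed to transport mass `p ∈ (0,1)` to graph distance
at least `n` from `o` is at most `(1-p)⁻¹ · e^{a'} · D^{2n}`, and every successful sequence of
toppling moves has length at least `(p / (2·e^{a+a'})) · e^{a·n}`. -/
theorem controlled_diffusion_exp_decay_green {V : Type*} (G : SimpleGraph V) [G.LocallyFinite]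
    [Infinite V] (hconn : G.Connected) (D : ℕ) (hD : ∀ v : V, G.degree v ≤ D)
    (a a' : ℝ) (ha : 0 < a)
    (hgreen : ∀ x y : V, greenFn G x y ≤ ENNReal.ofReal (Real.exp (-a * (G.dist x y : ℝ) + a')))
    (o : V) (p : ℝ) (hp0 : 0 < p) (hp1 : p < 1) (n : ℕ) (hn : 1 ≤ n) :
    (∃ t : ℕ, CanTransport G (gball G o n) p (pointMass o) t ∧
      (t : ℝ) ≤ (1 - p)⁻¹ * Real.exp a' * (D : ℝ) ^ (2 * n)) ∧
    (∀ t : ℕ, CanTransport G (gball G o n) p (pointMass o) t →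
      p / (2 * Real.exp (a + a')) * Real.exp (a * n) ≤ (t : ℝ)) :=
  controlled_diffusion_exp_decay_green_general G hconn D hD a a' ha hgreen o p hp1 n hn

end
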